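/- arXiv:2507.00391 — 3 statements merged into one kernel-verified Lean document; each statement's English description precedes it below -/
import Mathlib

section
/- Let G ∈ L²(ℝ) and define u₀(r) = (1/r)∫_{-r}^{r} G(s) ds and u₁(r) = (G(r)-G(-r))/r for r > 0, viewed as radial functions on ℝ³. Then for every R > 0, ∫_{|x|>R} (|∇u₀|² + |u₁|²) dx ≥ 8π ∫_{|s|>R} |G(s)|² ds. -/
/-!
Write `φ(s) = G(s) + G(-s)` and `A(t) = ∫₀ᵗ φ`, so that `u₀(r) = A(r)/r` and
`u₀'(r) = φ(r)/r - A(r)/r²` almost everywhere. For `x ≠ 0` the energy density at `x` is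
`u₀'(|x|)² + u₁(|x|)²`, and polar coordinates turn the exterior energy into
`4π ∫_R^∞ r² (u₀'² + u₁²) dr`. Pointwise,
`r² (u₀'² + u₁²) = 2 (G(r)² + G(-r)²) - (A²/r)'`, and `A²/r` is absolutely continuous on
`[R, T]` and tends to `0` at infinity by Cauchy–Schwarz, since `φ ∈ L²`. Hence the exterior
energy equals `8π ∫_{|s|>R} G² + 4π A(R)²/R`.
-/

open MeasureTheory Real Set Filter Topology

section RealAnalysis

theorem MeasureTheory.MemLp.intervalIntegrable {F : Type*} [NormedAddCommGroup F]
    {f : ℝ → F} {p : ENNReal} (hp : 1 ≤ p) (hf : MemLp f p volume) (a b : ℝ) :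
    IntervalIntegrable f volume a b :=
  ((hf.locallyIntegrable hp).integrableOn_isCompact isCompact_uIcc).intervalIntegrable

theorem MeasureTheory.MemLp.comp_neg {F : Type*} [NormedAddCommGroup F] {f : ℝ → F}
    {p : ENNReal} (hf : MemLp f p volume) : MemLp (fun s => f (-s)) p volume :=
  hf.comp_measurePreserving (Measure.measurePreserving_neg _)

theorem sq_intervalIntegral_le {f : ℝ → ℝ} {a b : ℝ} (hab : a ≤ b)
    (hf : IntervalIntegrable f volume a b)
    (hf2 : IntervalIntegrable (fun x => f x ^ 2) volume a b) :
    (∫ x in a..b, f x) ^ 2 ≤ (b - a) * ∫ x in a..b, f x ^ 2 := by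
  rcases hab.eq_or_lt with rfl | hlt
  · simp
  have jensen := (Even.convexOn_pow (n := 2) even_two).map_set_average_le
    (continuous_pow 2).continuousOn isClosed_univ (by simp [hlt]) (by simp)
    (ae_of_all _ fun _ => mem_univ _) hf.1 hf2.1
  simp only [setAverage_eq, smul_eq_mul, Real.volume_real_Ioc_of_le hab] at jensen
  rw [intervalIntegral.integral_of_le hab, intervalIntegral.integral_of_le hab]
  have hba : 0 < b - a := sub_pos.2 hlt
  rw [mul_pow, inv_pow, ← div_eq_inv_mul, ← div_eq_inv_mul,
    div_le_div_iff₀ (by positivity) hba] at jensen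
  nlinarith

theorem sq_intervalIntegral_div_le {φ : ℝ → ℝ} (hφ : MemLp φ 2 volume) {T₀ T : ℝ}
    (hT₀ : 0 ≤ T₀) (hT : T₀ < T) :
    (∫ s in 0..T, φ s) ^ 2 / T
      ≤ 2 * (∫ s in 0..T₀, φ s) ^ 2 / T + 2 * ∫ s in Ioi T₀, φ s ^ 2 := by
  have hT0 : 0 < T := hT₀.trans_lt hT
  have hφi := hφ.intervalIntegrable one_le_two
  have hφ2 : Integrable (fun s => φ s ^ 2) := hφ.integrable_sq
  set x := ∫ s in 0..T₀, φ s
  set y := ∫ s in T₀..T, φ s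
  have hsplit : (∫ s in 0..T, φ s) = x + y :=
    (intervalIntegral.integral_add_adjacent_intervals (hφi 0 T₀) (hφi T₀ T)).symm
  have hy : y ^ 2 ≤ T * ∫ s in Ioi T₀, φ s ^ 2 := calc
    y ^ 2 ≤ (T - T₀) * ∫ s in Ioc T₀ T, φ s ^ 2 := by
      rw [← intervalIntegral.integral_of_le hT.le]
      exact sq_intervalIntegral_le hT.le (hφi T₀ T) hφ2.intervalIntegrable
    _ ≤ T * ∫ s in Ioi T₀, φ s ^ 2 := by
      refine mul_le_mul (by linarith) ?_
        (setIntegral_nonneg measurableSet_Ioc fun s _ => sq_nonneg _) hT0.le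
      exact setIntegral_mono_set hφ2.integrableOn (ae_of_all _ fun s => sq_nonneg _)
        Ioc_subset_Ioi_self.eventuallyLE
  rw [hsplit, div_le_iff₀ hT0, add_mul, div_mul_cancel₀ _ hT0.ne']
  nlinarith [sq_nonneg (x - y)]

theorem tendsto_sq_intervalIntegral_div_atTop {φ : ℝ → ℝ} (hφ : MemLp φ 2 volume) :
    Tendsto (fun T => (∫ s in 0..T, φ s) ^ 2 / T) atTop (𝓝 0) := by
  refine tendsto_order.2 ⟨fun ε hε => ?_, fun ε hε => ?_⟩
  · filter_upwards [eventually_gt_atTop 0] with T hT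
    exact hε.trans_le (by positivity)
  have htail := tendsto_integral_Ioi_zero (f := fun s => φ s ^ 2) (μ := volume) tendsto_id
  obtain ⟨T₀, htail₀, hT₀⟩ := ((htail.eventually (gt_mem_nhds (half_pos (half_pos hε)))).and
    (eventually_ge_atTop 0)).exists
  have hdecay : Tendsto (fun T => 2 * (∫ s in 0..T₀, φ s) ^ 2 / T) atTop (𝓝 0) :=
    tendsto_const_nhds.div_atTop tendsto_id
  filter_upwards [eventually_gt_atTop T₀, hdecay.eventually (gt_mem_nhds (half_pos hε))]
    with T hT hsmall
  have := sq_intervalIntegral_div_le hφ hT₀ hT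
  simp only [id] at htail₀
  linarith

theorem integral_Ioi_eq_add_of_ae_eq_sub_deriv {w g P : ℝ → ℝ} {a : ℝ}
    (hw : ∀ r, 0 ≤ w r) (hg : IntegrableOn g (Ioi a))
    (hP : ∀ b, a ≤ b → AbsolutelyContinuousOnInterval P a b) (hPlim : Tendsto P atTop (𝓝 0))
    (hwgP : ∀ᵐ r, a < r → w r = g r - deriv P r) :
    ∫ r in Ioi a, w r = (∫ r in Ioi a, g r) + P a := by
  have hIoc : ∀ b, a ≤ b → IntegrableOn w (Ioc a b) ∧
      ∫ r in a..b, w r = (∫ r in a..b, g r) - (P b - P a) := by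
    intro b hab
    have hgb : IntegrableOn g (Ioc a b) := hg.mono_set Ioc_subset_Ioi_self
    have hPb := (hP b hab).intervalIntegrable_deriv
    have hae : w =ᵐ[volume.restrict (Ioc a b)] fun r => g r - deriv P r := by
      filter_upwards [ae_restrict_mem measurableSet_Ioc, ae_restrict_of_ae hwgP] with r hr h
      exact h hr.1
    rw [intervalIntegrable_iff_integrableOn_Ioc_of_le hab] at hPb
    refine ⟨(hgb.sub hPb).congr_fun_ae hae.symm, ?_⟩
    rw [← (hP b hab).integral_deriv_eq_sub, intervalIntegral.integral_of_le hab,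
      intervalIntegral.integral_of_le hab, intervalIntegral.integral_of_le hab,
      integral_congr_ae hae, integral_sub hgb hPb]
  have hlim : Tendsto (fun b => ∫ r in a..b, w r) atTop (𝓝 ((∫ r in Ioi a, g r) + P a)) := by
    have := (intervalIntegral_tendsto_integral_Ioi a hg tendsto_id).sub (hPlim.sub_const (P a))
    rw [zero_sub, sub_neg_eq_add] at this
    refine this.congr' ?_
    filter_upwards [eventually_ge_atTop a] with b hab
    exact (hIoc b hab).2.symm
  have hwi : IntegrableOn w (Ioi a) := by
    refine integrableOn_Ioi_of_intervalIntegral_norm_tendsto _ a (fun b => ?_) tendsto_id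
      (hlim.congr fun b => ?_)
    · rcases le_total a b with hab | hba
      · exact (hIoc b hab).1
      · simp [Ioc_eq_empty_of_le hba]
    · simp only [id, Real.norm_of_nonneg (hw _)]
  exact tendsto_nhds_unique (intervalIntegral_tendsto_integral_Ioi a hwi tendsto_id) hlim

theorem absolutelyContinuousOnInterval_sq_primitive_div {φ : ℝ → ℝ}
    (hφ : ∀ a b, IntervalIntegrable φ volume a b) {a b : ℝ} (ha : 0 < a) (hab : a ≤ b) :
    AbsolutelyContinuousOnInterval (fun r => (∫ s in 0..r, φ s) ^ 2 / r) a b := by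
  have hb : 0 ≤ b := (ha.trans_le hab).le
  have hA : AbsolutelyContinuousOnInterval (fun r => ∫ s in 0..r, φ s) a b :=
    ((hφ 0 b).absolutelyContinuousOnInterval_intervalIntegral left_mem_uIcc).mono
      (uIcc_subset_uIcc (by rw [uIcc_of_le hb]; exact ⟨ha.le, hab⟩) right_mem_uIcc)
  have hinv : AbsolutelyContinuousOnInterval (fun r : ℝ => r⁻¹) a b := by
    apply ContDiffOn.absolutelyContinuousOnInterval
    refine contDiffOn_inv ℝ |>.mono fun r hr => ?_
    rw [uIcc_of_le hab] at hr
    exact (ha.trans_le hr.1).ne'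
  simpa only [sq, div_eq_mul_inv] using (hA.fun_mul hA).fun_mul hinv

theorem hasDerivAt_sq_div {A : ℝ → ℝ} {a r : ℝ} (hA : HasDerivAt A a r) (hr : r ≠ 0) :
    HasDerivAt (fun t => A t ^ 2 / t) (2 * a * A r / r - A r ^ 2 / r ^ 2) r := by
  refine ((hA.fun_pow 2).fun_div (hasDerivAt_id' r) hr).congr_deriv ?_
  field_simp
  ring

theorem setIntegral_abs_gt {f : ℝ → ℝ} (hf : Integrable f) {R : ℝ} (hR : 0 ≤ R) :
    ∫ s in {s : ℝ | R < |s|}, f s = ∫ r in Ioi R, (f r + f (-r)) := by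
  have hset : {s : ℝ | R < |s|} = Iio (-R) ∪ Ioi R := by
    ext s
    simp only [mem_ofPred_eq, mem_union, mem_Iio, mem_Ioi, lt_abs]
    constructor <;> rintro (h | h) <;>
      first | exact Or.inl (by linarith) | exact Or.inr (by linarith)
  have hdisj : Disjoint (Iio (-R)) (Ioi R) :=
    (Iio_disjoint_Ici (by linarith : -R ≤ R)).mono_right Ioi_subset_Ici_self
  rw [hset, setIntegral_union hdisj measurableSet_Ioi hf.integrableOn hf.integrableOn,
    integral_add hf.integrableOn (hf.comp_neg).integrableOn, add_comm,
    ← integral_Iic_eq_integral_Iio, ← integral_comp_neg_Ioi]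

theorem setIntegral_Ioc_neg_eq {G : ℝ → ℝ} (hG : ∀ a b, IntervalIntegrable G volume a b)
    {t : ℝ} (ht : 0 ≤ t) :
    ∫ s in Ioc (-t) t, G s = ∫ s in 0..t, (G s + G (-s)) := by
  rw [← intervalIntegral.integral_of_le (by linarith),
    ← intervalIntegral.integral_add_adjacent_intervals (hG (-t) 0) (hG 0 t),
    intervalIntegral.integral_add (hG 0 t) ?_, add_comm, intervalIntegral.integral_comp_neg]
  · simp
  · simpa using ((IntervalIntegrable.iff_comp_neg).1 (hG (-t) 0)).symm

end RealAnalysis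

section RadialFunctions

theorem norm_fderiv_comp_norm_eq_of_norm_eq {E : Type*} [NormedAddCommGroup E]
    [InnerProductSpace ℝ E] (f : ℝ → ℝ) {x y : E} (h : ‖x‖ = ‖y‖) :
    ‖fderiv ℝ (fun z : E => f ‖z‖) x‖ = ‖fderiv ℝ (fun z : E => f ‖z‖) y‖ := by
  set L := (Submodule.reflection (ℝ ∙ (x - y))ᗮ).toContinuousLinearEquiv
  have hinv : (fun z : E => f ‖z‖) ∘ L = fun z => f ‖z‖ := by
    funext z
    simp [L]
  have := L.comp_right_fderiv (f := fun z : E => f ‖z‖) (x := x)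
  rw [hinv, show L x = y from Submodule.reflection_sub h] at this
  rw [this]
  exact ContinuousLinearMap.opNorm_comp_linearIsometryEquiv _ _

theorem norm_fderiv_comp_norm {E : Type*} [NormedAddCommGroup E] [NormedSpace ℝ E]
    [Nontrivial E] {f : ℝ → ℝ} {d : ℝ} {x : E} (hx : DifferentiableAt ℝ (‖·‖) x)
    (hf : HasDerivAt f d ‖x‖) :
    ‖fderiv ℝ (fun z : E => f ‖z‖) x‖ = |d| := by
  change ‖fderiv ℝ (f ∘ (‖·‖)) x‖ = |d|
  rw [(hf.comp_hasFDerivAt x hx.hasFDerivAt).fderiv, norm_smul, norm_fderiv_norm hx, mul_one,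
    Real.norm_eq_abs]

theorem setIntegral_comp_norm_gt {E F : Type*} [NormedAddCommGroup E] [NormedSpace ℝ E]
    [Nontrivial E] [FiniteDimensional ℝ E] [MeasurableSpace E] [BorelSpace E] (μ : Measure E)
    [μ.IsAddHaarMeasure] [NormedAddCommGroup F] [NormedSpace ℝ F] (f : ℝ → F) {R : ℝ}
    (hR : 0 ≤ R) :
    ∫ x in {x : E | R < ‖x‖}, f ‖x‖ ∂μ
      = Module.finrank ℝ E • μ.real (Metric.ball 0 1) •
          ∫ r in Ioi R, r ^ (Module.finrank ℝ E - 1) • f r := by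
  have hS : {x : E | R < ‖x‖} = (‖·‖) ⁻¹' Ioi R := rfl
  rw [hS, ← integral_indicator (measurableSet_Ioi.preimage measurable_norm)]
  have := integral_fun_norm_addHaar μ ((Ioi R).indicator f)
  simp only [← Set.indicator_comp_right (fun x : E => ‖x‖) (g := f), Function.comp_def] at this
  rw [this]
  simp only [← Set.indicator_smul_apply (Ioi R) (fun y : ℝ => y ^ (Module.finrank ℝ E - 1)) f]
  rw [setIntegral_indicator measurableSet_Ioi, Ioi_inter_Ioi, sup_eq_right.2 hR]

end RadialFunctions

section Profile

variable {E : Type*} [NormedAddCommGroup E] [InnerProductSpace ℝ E]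

/-- `u₀` of the paper, as a function of the radius. -/
noncomputable def radialAverage (G : ℝ → ℝ) (t : ℝ) : ℝ := (1 / t) * ∫ s in Ioc (-t) t, G s

noncomputable def symmPrimitive (G : ℝ → ℝ) (t : ℝ) : ℝ := ∫ s in 0..t, (G s + G (-s))

/-- The integrand `|∇u₀|² + |u₁|²` of the exterior energy. -/
noncomputable def energyDensity (G : ℝ → ℝ) (x : E) : ℝ :=
  ‖fderiv ℝ (fun y : E => radialAverage G ‖y‖) x‖ ^ 2 + ((G ‖x‖ - G (-‖x‖)) / ‖x‖) ^ 2

theorem energyDensity_eq_of_norm_eq (G : ℝ → ℝ) {x y : E} (h : ‖x‖ = ‖y‖) :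
    energyDensity G x = energyDensity G y := by
  rw [energyDensity, energyDensity, norm_fderiv_comp_norm_eq_of_norm_eq _ h, h]

theorem hasDerivAt_radialAverage {G : ℝ → ℝ} (hG : ∀ a b, IntervalIntegrable G volume a b)
    {r d : ℝ} (hr : 0 < r) (hA : HasDerivAt (symmPrimitive G) d r) :
    HasDerivAt (radialAverage G) (d / r - symmPrimitive G r / r ^ 2) r := by
  have hquot := hA.fun_div (hasDerivAt_id' r) hr.ne'
  refine (hquot.congr_of_eventuallyEq ?_).congr_deriv (by field_simp)
  filter_upwards [eventually_gt_nhds hr] with t ht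
  rw [radialAverage, setIntegral_Ioc_neg_eq hG ht.le, symmPrimitive, one_div_mul_eq_div]

theorem sq_mul_energyDensity_smul_ae {G : ℝ → ℝ} (hG : MemLp G 2 volume) {e : E}
    (he : ‖e‖ = 1) :
    ∀ᵐ r, 0 < r → r ^ 2 * energyDensity G (r • e)
      = 2 * (G r ^ 2 + G (-r) ^ 2) - deriv (fun t => symmPrimitive G t ^ 2 / t) r := by
  have hφ := (hG.add hG.comp_neg).locallyIntegrable one_le_two
  have : Nontrivial E := nontrivial_of_ne e 0 (norm_ne_zero_iff.1 (by simp [he]))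
  filter_upwards [_root_.LocallyIntegrable.ae_hasDerivAt_integral hφ] with r hA hr
  have hA : HasDerivAt (symmPrimitive G) (G r + G (-r)) r := hA 0
  have hnorm : ‖r • e‖ = r := by rw [norm_smul, he, mul_one, Real.norm_of_nonneg hr.le]
  have hx : r • e ≠ 0 := by rw [← norm_pos_iff, hnorm]; exact hr
  have hu : HasDerivAt (radialAverage G)
      ((G r + G (-r)) / r - symmPrimitive G r / r ^ 2) ‖r • e‖ := by
    rw [hnorm]; exact hasDerivAt_radialAverage (hG.intervalIntegrable one_le_two) hr hA
  rw [energyDensity, norm_fderiv_comp_norm ((contDiffAt_norm ℝ hx (n := 1)).differentiableAt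
    one_ne_zero) hu, sq_abs, hnorm, (hasDerivAt_sq_div hA hr.ne').deriv]
  field_simp
  ring

theorem integral_Ioi_sq_mul_energyDensity_smul {G : ℝ → ℝ} (hG : MemLp G 2 volume) {e : E}
    (he : ‖e‖ = 1) {R : ℝ} (hR : 0 < R) :
    ∫ r in Ioi R, r ^ 2 * energyDensity G (r • e)
      = 2 * (∫ r in Ioi R, (G r ^ 2 + G (-r) ^ 2)) + symmPrimitive G R ^ 2 / R := by
  have hφ : MemLp (fun s => G s + G (-s)) 2 volume := hG.add hG.comp_neg
  rw [← integral_const_mul]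
  refine integral_Ioi_eq_add_of_ae_eq_sub_deriv (P := fun t => symmPrimitive G t ^ 2 / t)
    (fun r => mul_nonneg (sq_nonneg r) (by unfold energyDensity; positivity))
    ((hG.integrable_sq.add hG.comp_neg.integrable_sq).const_mul 2).integrableOn
    (fun b hb => absolutelyContinuousOnInterval_sq_primitive_div
      (hφ.intervalIntegrable one_le_two) hR hb)
    (tendsto_sq_intervalIntegral_div_atTop hφ) ?_
  filter_upwards [sq_mul_energyDensity_smul_ae hG he] with r h hr
  exact h (hR.trans hr)

end Profile

/-- The exterior energy of the radial data determined by a radiation profile `G`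
dominates `8π` times the tail of `‖G‖_{L²}²`. -/
theorem stmt_1
    (G : ℝ → ℝ) (hG : MemLp G 2 (volume : Measure ℝ))
    (R : ℝ) (hR : 0 < R) :
    8 * π * (∫ s in {s : ℝ | R < |s|}, (G s) ^ 2)
      ≤ ∫ x in {x : EuclideanSpace ℝ (Fin 3) | R < ‖x‖},
          (‖fderiv ℝ (fun x : EuclideanSpace ℝ (Fin 3) =>
              (1 / ‖x‖) * ∫ s in Ioc (-‖x‖) ‖x‖, G s) x‖ ^ 2
            + ((G ‖x‖ - G (-‖x‖)) / ‖x‖) ^ 2) := by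
  set e : EuclideanSpace ℝ (Fin 3) := EuclideanSpace.single 0 1
  have he : ‖e‖ = 1 := by simp [e]
  have hball : volume.real (Metric.ball (0 : EuclideanSpace ℝ (Fin 3)) 1) = 4 / 3 * π := by
    rw [measureReal_def, EuclideanSpace.volume_ball_fin_three, ENNReal.ofReal_one, one_pow,
      one_mul, ENNReal.toReal_ofReal (by positivity)]
    ring
  change _ ≤ ∫ x in {x : EuclideanSpace ℝ (Fin 3) | R < ‖x‖}, energyDensity G x
  calc 8 * π * (∫ s in {s : ℝ | R < |s|}, (G s) ^ 2)
      = 4 * π * (2 * ∫ r in Ioi R, (G r ^ 2 + G (-r) ^ 2)) := by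
        rw [setIntegral_abs_gt hG.integrable_sq hR.le]; ring
    _ ≤ 4 * π * (2 * (∫ r in Ioi R, (G r ^ 2 + G (-r) ^ 2)) + symmPrimitive G R ^ 2 / R) := by
        gcongr; exact le_add_of_nonneg_right (by positivity)
    _ = ∫ x in {x : EuclideanSpace ℝ (Fin 3) | R < ‖x‖}, energyDensity G (‖x‖ • e) := by
        rw [setIntegral_comp_norm_gt volume (fun r => energyDensity G (r • e)) hR.le,
          finrank_euclideanSpace_fin, hball]
        simp only [smul_eq_mul]
        rw [integral_Ioi_sq_mul_energyDensity_smul hG he hR]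
        ring
    _ = ∫ x in {x : EuclideanSpace ℝ (Fin 3) | R < ‖x‖}, energyDensity G x := by
        refine setIntegral_congr_fun (measurableSet_lt measurable_const measurable_norm)
          fun x _ => energyDensity_eq_of_norm_eq G ?_
        rw [norm_smul, he, mul_one, norm_norm]
end

section
/- Let M, R > 0, γ ∈ (0,1), and let G ∈ L²(ℝ) be supported in [-R-γR,-R] with ‖G‖_{L²} ≤ M. Define the radial function v₀ on ℝ³ by v₀(x) = (1/|x|)∫_{-|x|}^{|x|} G(s)ds. Then ∫_{ℝ³} |v₀(x)|⁶ dx ≤ C γ³ M⁶ for an absolute constant C. -/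
open MeasureTheory Real Set Module

/-!
Since `G` vanishes on `(-R, R)`, `v₀` vanishes on the ball of radius `R`, and outside it
Cauchy–Schwarz on the support of `G` (of length `γR`) gives `|∫ G| ≤ (γR)^{1/2} M`. Hence
`|v₀(x)|⁶ ≤ (γR)³ M⁶ / max(|x|, R)⁶`, and the substitution `x = R y` shows that
`∫ max(|x|, R)⁻⁶ dx = R⁻³ ∫ max(|y|, 1)⁻⁶ dy`, the last integral being finite because `6 > 3`.
-/

section CauchySchwarz

variable {α : Type*} [MeasurableSpace α] {μ : Measure α}

theorem sq_integral_mul_le_integral_sq_mul_integral_sq {f g : α → ℝ}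
    (hf : MemLp f 2 μ) (hg : MemLp g 2 μ) :
    (∫ x, f x * g x ∂μ) ^ 2 ≤ (∫ x, f x ^ 2 ∂μ) * ∫ x, g x ^ 2 ∂μ := by
  have holder := integral_mul_le_Lp_mul_Lq_of_nonneg Real.HolderConjugate.two_two
    (ae_of_all μ fun x => abs_nonneg (f x)) (ae_of_all μ fun x => abs_nonneg (g x))
    (by simpa [Real.norm_eq_abs] using hf.norm) (by simpa [Real.norm_eq_abs] using hg.norm)
  simp only [Real.rpow_two, sq_abs] at holder
  have habs : |∫ x, f x * g x ∂μ| ≤ ∫ x, |f x| * |g x| ∂μ := by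
    simpa only [Real.norm_eq_abs, abs_mul] using
      norm_integral_le_integral_norm (fun x => f x * g x)
  have hf2 : 0 ≤ ∫ x, f x ^ 2 ∂μ := integral_nonneg fun x => sq_nonneg _
  have hg2 : 0 ≤ ∫ x, g x ^ 2 ∂μ := integral_nonneg fun x => sq_nonneg _
  calc (∫ x, f x * g x ∂μ) ^ 2 = |∫ x, f x * g x ∂μ| ^ 2 := (sq_abs _).symm
    _ ≤ ((∫ x, f x ^ 2 ∂μ) ^ (1 / 2 : ℝ) * (∫ x, g x ^ 2 ∂μ) ^ (1 / 2 : ℝ)) ^ 2 :=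
        pow_le_pow_left₀ (abs_nonneg _) (habs.trans holder) 2
    _ = (∫ x, f x ^ 2 ∂μ) * ∫ x, g x ^ 2 ∂μ := by
        rw [mul_pow, ← Real.rpow_natCast, ← Real.rpow_natCast (_ ^ _), ← Real.rpow_mul hf2,
          ← Real.rpow_mul hg2]
        norm_num

theorem sq_setIntegral_le_measureReal_mul_integral_sq {G : α → ℝ} {S A : Set α}
    (hμS : μ S ≠ ⊤) (hA : MeasurableSet A) (hG : MemLp G 2 μ)
    (hGS : ∀ x ∉ S, G x = 0) :
    (∫ x in A, G x ∂μ) ^ 2 ≤ μ.real S * ∫ x, G x ^ 2 ∂μ := by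
  have : Fact (μ S < ⊤) := ⟨hμS.lt_top⟩
  have hsupp : ∫ x in A, G x ∂μ = ∫ x in S, A.indicator G x ∂μ := by
    rw [← integral_indicator hA, setIntegral_eq_integral_of_forall_compl_eq_zero]
    intro x hx
    simp [hGS x hx]
  have hcs := sq_integral_mul_le_integral_sq_mul_integral_sq ((hG.indicator hA).restrict S)
    (memLp_const (μ := μ.restrict S) (1 : ℝ))
  simp only [mul_one, one_pow, integral_const, smul_eq_mul, measureReal_restrict_apply_univ] at hcs
  have hGA := (hG.indicator hA).integrable_sq
  have hsq : ∫ x in S, A.indicator G x ^ 2 ∂μ ≤ ∫ x, G x ^ 2 ∂μ :=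
    calc ∫ x in S, A.indicator G x ^ 2 ∂μ ≤ ∫ x, A.indicator G x ^ 2 ∂μ :=
          setIntegral_le_integral hGA (ae_of_all _ fun x => sq_nonneg _)
      _ ≤ ∫ x, G x ^ 2 ∂μ := integral_mono hGA hG.integrable_sq fun x => by
          by_cases hx : x ∈ A <;> simp [hx, sq_nonneg]
  rw [hsupp, mul_comm]
  exact hcs.trans (mul_le_mul_of_nonneg_right hsq measureReal_nonneg)

end CauchySchwarz

section Radial

variable {E : Type*} [NormedAddCommGroup E] [NormedSpace ℝ E]

theorem inv_max_norm_pow_eq_smul {R : ℝ} (hR : 0 < R) (k : ℕ) (x : E) :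
    (max ‖x‖ R ^ k)⁻¹ = (R ^ k)⁻¹ * (max ‖R⁻¹ • x‖ 1 ^ k)⁻¹ := by
  rw [← mul_inv, ← mul_pow, norm_smul, norm_inv, Real.norm_of_nonneg hR.le,
    mul_max_of_nonneg _ _ hR.le, mul_inv_cancel_left₀ hR.ne', mul_one]

variable [FiniteDimensional ℝ E] [MeasurableSpace E] [BorelSpace E]
  (μ : Measure E) [μ.IsAddHaarMeasure]

theorem integrable_inv_max_norm_one_pow {k : ℕ} (hk : finrank ℝ E < k) :
    Integrable (fun x : E => (max ‖x‖ 1 ^ k)⁻¹) μ := by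
  have hbase : Integrable (fun x : E => (1 + ‖x‖) ^ (-(k : ℝ))) μ :=
    integrable_one_add_norm (by exact_mod_cast hk)
  refine (hbase.const_mul (2 ^ k)).mono' (by fun_prop) (ae_of_all _ fun x => ?_)
  have hmax : 0 < max ‖x‖ 1 := lt_max_of_lt_right one_pos
  rw [Real.norm_of_nonneg (by positivity), Real.rpow_neg (by positivity), Real.rpow_natCast,
    ← div_eq_mul_inv, le_div_iff₀ (by positivity), ← div_eq_inv_mul,
    div_le_iff₀ (by positivity), ← mul_pow]
  gcongr
  linarith [le_max_left ‖x‖ 1, le_max_right ‖x‖ 1]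

theorem integral_inv_max_norm_one_pow_pos [Nontrivial E] {k : ℕ} (hk : finrank ℝ E < k) :
    0 < ∫ x : E, (max ‖x‖ 1 ^ k)⁻¹ ∂μ := by
  rw [integral_pos_iff_support_of_nonneg (fun x => by positivity)
    (integrable_inv_max_norm_one_pow μ hk)]
  have hsupp : Function.support (fun x : E => (max ‖x‖ 1 ^ k)⁻¹) = univ :=
    eq_univ_of_forall fun x => inv_ne_zero (pow_ne_zero _ (lt_max_of_lt_right one_pos).ne')
  simp [hsupp]

theorem integrable_inv_max_norm_pow {R : ℝ} (hR : 0 < R) {k : ℕ} (hk : finrank ℝ E < k) :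
    Integrable (fun x : E => (max ‖x‖ R ^ k)⁻¹) μ := by
  simp_rw [inv_max_norm_pow_eq_smul hR]
  exact ((integrable_inv_max_norm_one_pow μ hk).comp_smul (inv_ne_zero hR.ne')).const_mul _

theorem integral_inv_max_norm_pow {R : ℝ} (hR : 0 < R) (k : ℕ) :
    ∫ x : E, (max ‖x‖ R ^ k)⁻¹ ∂μ = R ^ finrank ℝ E / R ^ k * ∫ x : E, (max ‖x‖ 1 ^ k)⁻¹ ∂μ := by
  simp_rw [inv_max_norm_pow_eq_smul hR]
  rw [integral_const_mul,
    Measure.integral_comp_inv_smul_of_nonneg μ (fun x => (max ‖x‖ 1 ^ k)⁻¹) hR.le, smul_eq_mul]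
  ring

end Radial

section Profile

variable {G : ℝ → ℝ} {R L : ℝ}

theorem setIntegral_Ioc_neg_eq_zero_of_lt (hsupp : ∀ s ∉ Icc (-R - L) (-R), G s = 0) {r : ℝ}
    (hr : r < R) : ∫ s in Ioc (-r) r, G s = 0 :=
  setIntegral_eq_zero_of_forall_eq_zero fun s hs =>
    hsupp s fun hS => by linarith [hs.1, hS.2]

theorem sq_setIntegral_Ioc_le (hL : 0 ≤ L) (hG : MemLp G 2 volume)
    (hsupp : ∀ s ∉ Icc (-R - L) (-R), G s = 0) (a b : ℝ) :
    (∫ s in Ioc a b, G s) ^ 2 ≤ L * ∫ s, G s ^ 2 := by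
  have hvol : volume.real (Icc (-R - L) (-R)) = L := by
    rw [Real.volume_real_Icc_of_le (by linarith)]
    ring
  simpa only [hvol] using sq_setIntegral_le_measureReal_mul_integral_sq measure_Icc_lt_top.ne
    measurableSet_Ioc hG hsupp

theorem abs_one_div_mul_setIntegral_pow_six_le (hR : 0 < R) (hL : 0 ≤ L)
    (hG : MemLp G 2 volume) (hsupp : ∀ s ∉ Icc (-R - L) (-R), G s = 0) {M : ℝ}
    (hM : ∫ s, G s ^ 2 ≤ M ^ 2) (r : ℝ) :
    |(1 / r) * ∫ s in Ioc (-r) r, G s| ^ 6 ≤ L ^ 3 * M ^ 6 * (max r R ^ 6)⁻¹ := by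
  rcases lt_or_ge r R with hr | hr
  · rw [setIntegral_Ioc_neg_eq_zero_of_lt hsupp hr, mul_zero, abs_zero, zero_pow (by norm_num)]
    have : 0 < max r R := lt_max_of_lt_right hR
    positivity
  have hI : (∫ s in Ioc (-r) r, G s) ^ 2 ≤ L * M ^ 2 :=
    (sq_setIntegral_Ioc_le hL hG hsupp _ _).trans (mul_le_mul_of_nonneg_left hM hL)
  rw [max_eq_left hr, pow_abs, mul_pow, div_pow, one_pow,
    show (∫ s in Ioc (-r) r, G s) ^ 6 = ((∫ s in Ioc (-r) r, G s) ^ 2) ^ 3 by ring,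
    abs_of_nonneg (by positivity), one_div, mul_comm]
  gcongr
  calc ((∫ s in Ioc (-r) r, G s) ^ 2) ^ 3 ≤ (L * M ^ 2) ^ 3 := by gcongr
    _ = L ^ 3 * M ^ 6 := by ring

end Profile

/-- `L⁶` bound for the time-zero value of a radial free wave with
concentrated radiation profile: `∫ |v₀|⁶ ≤ C γ³ M⁶`. -/
theorem stmt_11 :
    ∃ C : ℝ, 0 < C ∧
      ∀ (M R γ : ℝ), 0 < M → 0 < R → 0 < γ → γ < 1 →
        ∀ G : ℝ → ℝ, MemLp G 2 (volume : Measure ℝ) →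
          (∀ s : ℝ, s ∉ Icc (-R - γ * R) (-R) → G s = 0) →
          (∫ s : ℝ, (G s) ^ 2) ≤ M ^ 2 →
          (∫ x : EuclideanSpace ℝ (Fin 3),
              |(1 / ‖x‖) * ∫ s in Ioc (-‖x‖) ‖x‖, G s| ^ 6)
            ≤ C * γ ^ 3 * M ^ 6 := by
  have hdim : finrank ℝ (EuclideanSpace ℝ (Fin 3)) < 6 := by simp
  refine ⟨∫ x : EuclideanSpace ℝ (Fin 3), (max ‖x‖ 1 ^ 6)⁻¹,
    integral_inv_max_norm_one_pow_pos volume hdim, ?_⟩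
  intro M R γ _ hR hγ _ G hG hsupp hM
  calc (∫ x : EuclideanSpace ℝ (Fin 3), |(1 / ‖x‖) * ∫ s in Ioc (-‖x‖) ‖x‖, G s| ^ 6)
      ≤ ∫ x : EuclideanSpace ℝ (Fin 3), (γ * R) ^ 3 * M ^ 6 * (max ‖x‖ R ^ 6)⁻¹ :=
        integral_mono_of_nonneg (ae_of_all _ fun _ => by positivity)
          ((integrable_inv_max_norm_pow volume hR hdim).const_mul _)
          (ae_of_all _ fun x => abs_one_div_mul_setIntegral_pow_six_le hR (by positivity) hG
            hsupp hM ‖x‖)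
    _ = (∫ x : EuclideanSpace ℝ (Fin 3), (max ‖x‖ 1 ^ 6)⁻¹) * γ ^ 3 * M ^ 6 := by
        rw [integral_const_mul, integral_inv_max_norm_pow volume hR, finrank_euclideanSpace_fin]
        field_simp
end

section
/- Let ℓ > 1, δ > 0, G ∈ L²(ℝ), and define φ_ℓ(t) = ‖G‖_{L²([-t, -t/ℓ])} for t > 0. Suppose φ_ℓ(t) ≥ δ/4 for all t in an interval [b, a] with 0 < b < a. Then (δ²/16)·⌊log_ℓ(a/b)⌋ ≤ ∫_{-a}^{-b} |G(s)|² ds. In particular, a/b ≤ ℓ^{1 + 16‖G‖²_{L²}/δ²}. -/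
open MeasureTheory Real Set

/-- If the local radiation strength `φ_ℓ(t) = ‖G‖_{L²([-t,-t/ℓ])}` is at least
`δ/4` on `[b,a]`, then `(δ²/16)⌊log_ℓ(a/b)⌋ ≤ ∫_{-a}^{-b}|G|²`; in particular
`a/b ≤ ℓ^{1 + 16‖G‖²_{L²}/δ²}`. -/
theorem stmt_17 (ℓ δ a b : ℝ) (hℓ : 1 < ℓ) (hδ : 0 < δ) (hb : 0 < b) (hba : b < a)
    (G : ℝ → ℝ) (hG : Integrable (fun s => (G s) ^ 2) (volume : Measure ℝ))
    (hφ : ∀ t ∈ Icc b a,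
      δ / 4 ≤ Real.sqrt (∫ s in Icc (-t) (-t / ℓ), (G s) ^ 2)) :
    (δ ^ 2 / 16) * ((⌊Real.logb ℓ (a / b)⌋ : ℤ) : ℝ)
        ≤ ∫ s in Icc (-a) (-b), (G s) ^ 2
      ∧ a / b ≤ Real.rpow ℓ (1 + 16 * (∫ s : ℝ, (G s) ^ 2) / δ ^ 2) := by
  have hℓ0 : (0:ℝ) < ℓ := lt_trans one_pos hℓ
  have ha : 0 < a := hb.trans hba
  have hab1 : 1 < a / b := (one_lt_div hb).mpr hba
  set L := Real.logb ℓ (a / b) with hLdef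
  have hL0 : 0 ≤ L := Real.logb_nonneg hℓ hab1.le
  have hfloor0 : (0:ℤ) ≤ ⌊L⌋ := Int.floor_nonneg.mpr hL0
  set N : ℕ := ⌊L⌋.toNat with hNdef
  have hNcast : ((⌊L⌋ : ℤ) : ℝ) = (N : ℝ) := by
    rw [hNdef]
    exact_mod_cast congrArg (fun z : ℤ => (z : ℝ)) (Int.toNat_of_nonneg hfloor0).symm
  have hInt : ∀ c d : ℝ, IntervalIntegrable (fun s => (G s) ^ 2) volume c d :=
    fun c d => hG.intervalIntegrable
  -- from hφ, interval-integral form of the lower bound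
  have hstep : ∀ t ∈ Icc b a, δ ^ 2 / 16 ≤ ∫ s in (-t)..(-t / ℓ), (G s) ^ 2 := by
    intro t ht
    have ht0 : 0 < t := lt_of_lt_of_le hb ht.1
    have hIcc0 : 0 ≤ ∫ s in Icc (-t) (-t / ℓ), (G s) ^ 2 :=
      setIntegral_nonneg measurableSet_Icc (fun s _ => sq_nonneg _)
    have h1 : (δ / 4) ^ 2 ≤ (Real.sqrt (∫ s in Icc (-t) (-t / ℓ), (G s) ^ 2)) ^ 2 :=
      pow_le_pow_left₀ (by positivity) (hφ t ht) 2
    rw [Real.sq_sqrt hIcc0] at h1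
    have hle : -t ≤ -t / ℓ := by
      rw [neg_div]
      exact neg_le_neg ((div_le_self ht0.le hℓ.le))
    rw [intervalIntegral.integral_of_le hle, ← MeasureTheory.integral_Icc_eq_integral_Ioc]
    nlinarith
  -- ℓ^k ≤ a/b for k ≤ N
  have hpow : ∀ k : ℕ, k ≤ N → ℓ ^ k ≤ a / b := by
    intro k hk
    have hkL : (k : ℝ) ≤ L := by
      have : (k : ℝ) ≤ ((⌊L⌋ : ℤ) : ℝ) := by rw [hNcast]; exact_mod_cast hk
      exact this.trans (Int.floor_le L)
    calc ℓ ^ k = ℓ ^ ((k : ℝ)) := (Real.rpow_natCast ℓ k).symm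
      _ ≤ ℓ ^ L := (Real.rpow_le_rpow_left_iff hℓ).mpr hkL
      _ = a / b := Real.rpow_logb (by positivity) (ne_of_gt hℓ) (by positivity)
  have key : ∀ k : ℕ, k ≤ N →
      (δ ^ 2 / 16) * k ≤ ∫ s in (-(b * ℓ ^ k))..(-b), (G s) ^ 2 := by
    intro k
    induction k with
    | zero => intro _; simp
    | succ k ih =>
      intro hk
      have ihk := ih (Nat.le_of_succ_le hk)
      have htmem : b * ℓ ^ (k+1) ∈ Icc b a := by
        constructor
        · exact le_mul_of_one_le_right hb.le (one_le_pow₀ hℓ.le)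
        · have := hpow (k+1) hk
          calc b * ℓ ^ (k+1) ≤ b * (a / b) := by
                exact mul_le_mul_of_nonneg_left this hb.le
            _ = a := by field_simp
      have hdiv : -(b * ℓ ^ (k+1)) / ℓ = -(b * ℓ ^ k) := by
        field_simp; ring
      have hst := hstep _ htmem
      rw [hdiv] at hst
      have hadd := intervalIntegral.integral_add_adjacent_intervals
        (a := -(b * ℓ ^ (k+1))) (b := -(b * ℓ ^ k)) (c := -b) (hInt _ _) (hInt _ _)
      push_cast
      linarith
  have hmain := key N le_rfl
  have htNa : b * ℓ ^ N ≤ a := by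
    have := hpow N le_rfl
    calc b * ℓ ^ N ≤ b * (a / b) := mul_le_mul_of_nonneg_left this hb.le
      _ = a := by field_simp
  have hsplit := intervalIntegral.integral_add_adjacent_intervals
    (a := -a) (b := -(b * ℓ ^ N)) (c := -b) (hInt _ _) (hInt _ _)
  have hnn : (0:ℝ) ≤ ∫ s in (-a)..(-(b * ℓ ^ N)), (G s) ^ 2 :=
    intervalIntegral.integral_nonneg (neg_le_neg htNa) (fun s _ => sq_nonneg _)
  have hIab : (δ ^ 2 / 16) * (N : ℝ) ≤ ∫ s in (-a)..(-b), (G s) ^ 2 := by linarith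
  have hIccEq : (∫ s in Icc (-a) (-b), (G s) ^ 2) = ∫ s in (-a)..(-b), (G s) ^ 2 := by
    rw [intervalIntegral.integral_of_le (by linarith : -a ≤ -b),
      ← MeasureTheory.integral_Icc_eq_integral_Ioc]
  have part1 : (δ ^ 2 / 16) * ((⌊L⌋ : ℤ) : ℝ) ≤ ∫ s in Icc (-a) (-b), (G s) ^ 2 := by
    rw [hNcast, hIccEq]; exact hIab
  refine ⟨part1, ?_⟩
  have htot : (∫ s in Icc (-a) (-b), (G s) ^ 2) ≤ ∫ s : ℝ, (G s) ^ 2 :=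
    setIntegral_le_integral hG (Filter.Eventually.of_forall fun s => sq_nonneg _)
  have hNle : (N : ℝ) ≤ 16 * (∫ s : ℝ, (G s) ^ 2) / δ ^ 2 := by
    have h := part1.trans htot
    rw [hNcast] at h
    rw [le_div_iff₀ (by positivity : (0:ℝ) < δ ^ 2)]
    nlinarith
  have hLlt : L < 1 + 16 * (∫ s : ℝ, (G s) ^ 2) / δ ^ 2 := by
    have h1 : L < ((⌊L⌋ : ℤ) : ℝ) + 1 := Int.lt_floor_add_one L
    rw [hNcast] at h1
    linarith
  calc a / b = ℓ ^ L := (Real.rpow_logb (by positivity) (ne_of_gt hℓ) (by positivity)).symm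
    _ ≤ Real.rpow ℓ (1 + 16 * (∫ s : ℝ, (G s) ^ 2) / δ ^ 2) :=
        (Real.rpow_le_rpow_left_iff hℓ).mpr hLlt.le
end
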